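/- arXiv:2105.09000 — 2 statements merged into one kernel-verified Lean document; each statement's English description precedes it below -/
import Mathlib

section
/- For all integers s ≥ 2 and m ≥ 1, the continuant of the word w_max = s·(s-1)^{m-1}·(s-2)·(s-3)^{m-1}⋯1·1^{m-1}⋯(s-2)^{m-1}·(s-1)·s^{m-1} (the extremal arrangement with Parikh vector (m,…,m) over the alphabet {1,…,s}) is strictly less than 2^{2s} · s! · ((s+1)!)^m. -/
/-- The regular continuant of a finite word of positive integers. -/
def K : List ℕ → ℕ
  | [] => 1
  | [a] => a
  | a :: b :: t => a * K (b :: t) + K t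

/-- Ramharter's maximizing arrangement over `{1,…,s}` with Parikh vector `(m,…,m)`:
`wmax m s = s·(s-1)^{m-1}·(s-2)·(s-3)^{m-1}⋯1^m⋯(s-2)^{m-1}·(s-1)·s^{m-1}`. -/
def wmax (m : ℕ) : ℕ → List ℕ
  | 0 => []
  | 1 => List.replicate m 1
  | (s + 2) =>
      (s + 2) :: (List.replicate (m - 1) (s + 1) ++ wmax m s
        ++ (s + 1) :: List.replicate (m - 1) (s + 2))

theorem K_le_cons (b : ℕ) (hb : 1 ≤ b) (t : List ℕ) : K t ≤ K (b :: t) := by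
  cases t with
  | nil => simpa [K] using hb
  | cons c t' =>
      show K (c :: t') ≤ K (b :: c :: t')
      rw [K]
      nlinarith [Nat.zero_le (K t'), Nat.zero_le (K (c :: t'))]

theorem K_lt_prod : ∀ (w : List ℕ), w ≠ [] → (∀ x ∈ w, 1 ≤ x) →
    K w < ((w.map (· + 1)).prod)
  | [], h, _ => absurd rfl h
  | [a], _, _ => by simp [K]
  | a :: b :: t, _, h => by
      have hb : 1 ≤ b := h b (by simp)
      have ih := K_lt_prod (b :: t) (by simp) (fun x hx => h x (by simp [hx]))
      have h1 := K_le_cons b hb t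
      have h2 : K (a :: b :: t) ≤ (a + 1) * K (b :: t) := by
        rw [K]; nlinarith
      calc K (a :: b :: t) ≤ (a + 1) * K (b :: t) := h2
        _ < (a + 1) * ((b :: t).map (· + 1)).prod :=
            Nat.mul_lt_mul_of_pos_left ih (Nat.succ_pos _)
        _ = ((a :: b :: t).map (· + 1)).prod := by simp

theorem wmax_mem (m : ℕ) : ∀ s, ∀ x ∈ wmax m s, 1 ≤ x
  | 0 => by simp [wmax]
  | 1 => by
      intro x hx
      rw [wmax] at hx
      rcases List.eq_of_mem_replicate hx with rfl
      omega
  | s + 2 => by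
      intro x hx
      simp only [wmax, List.mem_cons, List.mem_append, List.mem_replicate] at hx
      rcases hx with rfl | ((⟨_, rfl⟩ | hx) | (rfl | ⟨_, rfl⟩))
      · omega
      · omega
      · exact wmax_mem m s x hx
      · omega
      · omega

theorem wmax_prod (m : ℕ) (hm : 1 ≤ m) :
    ∀ s, ((wmax m s).map (· + 1)).prod = (Nat.factorial (s + 1)) ^ m
  | 0 => by simp [wmax]
  | 1 => by
      rw [wmax, List.map_replicate, List.prod_replicate]
      norm_num [Nat.factorial]
  | s + 2 => by
      have ih := wmax_prod m hm s
      obtain ⟨k, rfl⟩ : ∃ k, m = k + 1 := ⟨m - 1, by omega⟩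
      simp only [wmax, List.map_cons, List.map_append, List.prod_cons,
        List.prod_append, List.map_replicate, List.prod_replicate,
        Nat.add_sub_cancel, ih]
      rw [Nat.factorial_succ (s + 2), Nat.factorial_succ (s + 1), mul_pow, mul_pow]
      ring

/-- `K(w_max) < 2^{2s}·s!·((s+1)!)^m`. -/
theorem continuant_wmax_lt (s m : ℕ) (hs : 2 ≤ s) (hm : 1 ≤ m) :
    K (wmax m s) < 2 ^ (2 * s) * Nat.factorial s * (Nat.factorial (s + 1)) ^ m := by
  have hne : wmax m s ≠ [] := by
    obtain ⟨t, rfl⟩ : ∃ t, s = t + 2 := ⟨s - 2, by omega⟩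
    simp [wmax]
  have h := K_lt_prod (wmax m s) hne (wmax_mem m s)
  rw [wmax_prod m hm s] at h
  have h1 : 1 ≤ 2 ^ (2 * s) * Nat.factorial s :=
    Nat.one_le_iff_ne_zero.mpr (by positivity)
  calc K (wmax m s) < (Nat.factorial (s + 1)) ^ m := h
    _ = 1 * (Nat.factorial (s + 1)) ^ m := (one_mul _).symm
    _ ≤ 2 ^ (2 * s) * Nat.factorial s * (Nat.factorial (s + 1)) ^ m :=
        Nat.mul_le_mul_right _ h1
end

section
/- Fix integers s ≥ 2 and m ≥ 1, and let P(s,m) denote the number of distinct values of the regular continuant K on permutations of the word 1^m 2^m ⋯ s^m, and N(s,m) = (sm)!/(2·(m!)^s). Then N(s,m)/P(s,m) → ∞ as m → ∞, provided s is sufficiently large; more precisely, for s sufficiently large there exists a constant H(s) > 1 such that N(s,m)/P(s,m) > H(s)^m for all sufficiently large m. -/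
open Filter

/-- The equipartitioned word `1^m 2^m ⋯ s^m`. -/
def eqWord (s m : ℕ) : List ℕ := (List.range s).flatMap (fun i => List.replicate m (i + 1))

/-- `P s m`: the number of distinct continuant values on permutations of `1^m⋯s^m`. -/
def P (s m : ℕ) : ℕ := (((eqWord s m).permutations.map K).toFinset).card

/-- `N s m = (sm)!/(2(m!)^s)`, the lower bound on the number of permutations up to reversal. -/
noncomputable def N (s m : ℕ) : ℝ :=
  (Nat.factorial (s * m) : ℝ) / (2 * (Nat.factorial m : ℝ) ^ s)

/-! ### Auxiliary lemmas -/

lemma K_le : ∀ w : List ℕ, K w ≤ (w.map (· + 1)).prod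
  | [] => by simp [K]
  | [a] => by simp [K]
  | a :: b :: t => by
    have h1 := K_le (b :: t)
    have h2 := K_le t
    have h3 : (t.map (· + 1)).prod ≤ ((b :: t).map (· + 1)).prod := by
      simp only [List.map_cons, List.prod_cons]
      exact Nat.le_mul_of_pos_left _ (by omega)
    simp only [K, List.map_cons, List.prod_cons] at *
    calc a * K (b :: t) + K t ≤ a * ((b+1) * (t.map (· + 1)).prod) + (b+1) * (t.map (· + 1)).prod := by
          exact Nat.add_le_add (Nat.mul_le_mul_left _ h1) (le_trans h2 h3)
      _ = (a + 1) * ((b + 1) * (t.map (· + 1)).prod) := by ring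

lemma prod_range_add_two (s : ℕ) : ((List.range s).map (fun i => i + 2)).prod = Nat.factorial (s+1) := by
  induction s with
  | zero => simp [Nat.factorial]
  | succ n ih =>
    rw [List.range_succ, List.map_append, List.prod_append]
    simp [ih, Nat.factorial_succ]
    ring

lemma prod_map_pow (l : List ℕ) (m : ℕ) :
    (l.map (fun i => (i+2)^m)).prod = (l.map (fun i => i+2)).prod ^ m := by
  induction l with
  | nil => simp
  | cons a t ih => simp [ih, mul_pow]

lemma prod_eqWord (s m : ℕ) : ((eqWord s m).map (· + 1)).prod = (Nat.factorial (s+1))^m := by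
  unfold eqWord
  rw [List.map_flatMap]
  simp only [List.map_replicate]
  rw [List.flatMap, List.prod_flatten, List.map_map]
  have : (List.prod ∘ fun i => List.replicate m (i + 1 + 1)) = fun i => (i+2)^m := by
    funext i; simp [List.prod_replicate]
  rw [this, prod_map_pow, prod_range_add_two]

lemma P_pos (s m : ℕ) : 0 < P s m := by
  apply Finset.card_pos.mpr
  exact ⟨K (eqWord s m), by
    rw [List.mem_toFinset]
    exact List.mem_map_of_mem (f := K) (List.mem_permutations.mpr (List.Perm.refl _))⟩

lemma P_le (s m : ℕ) : P s m ≤ (Nat.factorial (s+1))^m + 1 := by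
  have hsub : ((eqWord s m).permutations.map K).toFinset ⊆
      Finset.range ((Nat.factorial (s+1))^m + 1) := by
    intro x hx
    rw [List.mem_toFinset, List.mem_map] at hx
    obtain ⟨w, hw, rfl⟩ := hx
    have hperm : w.Perm (eqWord s m) := List.mem_permutations.mp hw
    have h1 : K w ≤ (w.map (· + 1)).prod := K_le w
    have h2 : (w.map (· + 1)).prod = ((eqWord s m).map (· + 1)).prod :=
      (hperm.map (· + 1)).prod_eq
    rw [Finset.mem_range]
    have := prod_eqWord s m
    omega
  calc P s m ≤ (Finset.range ((Nat.factorial (s+1))^m + 1)).card := Finset.card_le_card hsub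
    _ = (Nat.factorial (s+1))^m + 1 := Finset.card_range _

/-- The multinomial-type product `∏ C(km, m)`. -/
def Amul (s m : ℕ) : ℕ := ∏ k ∈ Finset.range s, Nat.choose ((k+1)*m) m

lemma factorial_eq (s m : ℕ) :
    Nat.factorial (s * m) = Amul s m * (Nat.factorial m) ^ s := by
  induction s with
  | zero => simp [Amul]
  | succ n ih =>
    have h := Nat.add_choose_mul_factorial_mul_factorial (n * m) m
    have e : n * m + m = (n + 1) * m := by ring
    rw [e] at h
    calc Nat.factorial ((n+1) * m) = ((n+1)*m).choose m * (n*m).factorial * m.factorial := h.symm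
      _ = ((n+1)*m).choose m * (Amul n m * (Nat.factorial m)^n) * m.factorial := by rw [ih]
      _ = Amul (n+1) m * (Nat.factorial m) ^ (n+1) := by
          unfold Amul
          rw [Finset.prod_range_succ]
          ring

private def f (n r i : ℕ) : ℕ := n.choose i * r ^ i * (n - r) ^ (n - i)

lemma f_up (n r : ℕ) (hr : r ≤ n) (i : ℕ) (hi : i < r) : f n r i ≤ f n r (i+1) := by
  have key : n.choose (i+1) * (i+1) = n.choose i * (n - i) := Nat.choose_succ_right_eq n i
  have hmul : f n r i * (i+1) ≤ f n r (i+1) * (i+1) := by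
    have e1 : f n r (i+1) * (i+1) = (n.choose (i+1) * (i+1)) * (r ^ (i+1) * (n - r) ^ (n - (i+1))) := by
      unfold f; ring
    rw [key] at e1
    have e2 : f n r i * (i+1) = n.choose i * ((i+1) * (n-r)) * (r ^ i * (n - r) ^ (n - (i+1))) := by
      unfold f
      have : (n - r) ^ (n - i) = (n - r) * (n - r) ^ (n - (i+1)) := by
        rw [← pow_succ']; congr 1; omega
      rw [this]; ring
    rw [e1, e2]
    have h4 : (i+1) * (n - r) ≤ r * (n - i) := Nat.mul_le_mul (by omega) (by omega)
    calc n.choose i * ((i+1) * (n-r)) * (r ^ i * (n - r) ^ (n - (i+1)))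
        ≤ n.choose i * (r * (n - i)) * (r ^ i * (n - r) ^ (n - (i+1))) := by
          exact Nat.mul_le_mul_right _ (Nat.mul_le_mul_left _ h4)
      _ = n.choose i * (n - i) * (r ^ (i+1) * (n - r) ^ (n - (i+1))) := by ring
  exact Nat.le_of_mul_le_mul_right hmul (by omega)

lemma f_down (n r : ℕ) (hr : r ≤ n) (i : ℕ) (hri : r ≤ i) (hi : i < n) : f n r (i+1) ≤ f n r i := by
  have key : n.choose (i+1) * (i+1) = n.choose i * (n - i) := Nat.choose_succ_right_eq n i
  have hmul : f n r (i+1) * (i+1) ≤ f n r i * (i+1) := by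
    have e1 : f n r (i+1) * (i+1) = (n.choose (i+1) * (i+1)) * (r ^ (i+1) * (n - r) ^ (n - (i+1))) := by
      unfold f; ring
    rw [key] at e1
    have e2 : f n r i * (i+1) = n.choose i * ((i+1) * (n-r)) * (r ^ i * (n - r) ^ (n - (i+1))) := by
      unfold f
      have : (n - r) ^ (n - i) = (n - r) * (n - r) ^ (n - (i+1)) := by
        rw [← pow_succ']; congr 1; omega
      rw [this]; ring
    rw [e1, e2]
    have h4 : (n - i) * r ≤ (i+1) * (n - r) := by
      calc (n - i) * r ≤ (n - r) * (i+1) := Nat.mul_le_mul (by omega) (by omega)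
        _ = (i+1) * (n - r) := Nat.mul_comm _ _
    calc n.choose i * (n - i) * (r ^ (i+1) * (n - r) ^ (n - (i+1)))
        = n.choose i * ((n - i) * r) * (r ^ i * (n - r) ^ (n - (i+1))) := by ring
      _ ≤ n.choose i * ((i+1) * (n-r)) * (r ^ i * (n - r) ^ (n - (i+1))) := by
          exact Nat.mul_le_mul_right _ (Nat.mul_le_mul_left _ h4)
  exact Nat.le_of_mul_le_mul_right hmul (by omega)

lemma f_le_max (n r : ℕ) (hr : r ≤ n) (i : ℕ) (hi : i ≤ n) : f n r i ≤ f n r r := by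
  rcases le_or_gt i r with h | h
  · have key : ∀ k, k ≤ r → f n r (r - k) ≤ f n r r := by
      intro k
      induction k with
      | zero => simp
      | succ j ih =>
        intro hj
        have h1 : r - (j+1) < r := by omega
        have h2 := f_up n r hr (r - (j+1)) h1
        have e : r - (j+1) + 1 = r - j := by omega
        rw [e] at h2
        exact le_trans h2 (ih (by omega))
    have := key (r - i) (by omega)
    rwa [Nat.sub_sub_self h] at this
  · have key : ∀ j, r + j ≤ n → f n r (r + j) ≤ f n r r := by
      intro j
      induction j with
      | zero => simp
      | succ k ih =>
        intro hj
        have h2 := f_down n r hr (r + k) (by omega) (by omega)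
        exact le_trans h2 (ih (by omega))
    have := key (i - r) (by omega)
    rwa [Nat.add_sub_cancel' (le_of_lt h)] at this

lemma choose_max (n r : ℕ) (hr : r ≤ n) :
    n ^ n ≤ (n + 1) * (n.choose r * r ^ r * (n - r) ^ (n - r)) := by
  have hsum : n ^ n = ∑ i ∈ Finset.range (n+1), f n r i := by
    have := (Commute.all (r : ℕ) (n - r)).add_pow n
    rw [Nat.add_sub_cancel' hr] at this
    rw [this]
    apply Finset.sum_congr rfl
    intro i _
    unfold f; push_cast; ring
  rw [hsum]
  calc ∑ i ∈ Finset.range (n+1), f n r i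
      ≤ ∑ _i ∈ Finset.range (n+1), f n r r := by
        apply Finset.sum_le_sum
        intro i hi
        exact f_le_max n r hr i (by simpa using Nat.lt_succ_iff.mp (Finset.mem_range.mp hi))
    _ = (n+1) * f n r r := by rw [Finset.sum_const, Finset.card_range]; ring
    _ = (n+1) * (n.choose r * r ^ r * (n - r) ^ (n - r)) := rfl

lemma telescoped (s m : ℕ) :
    (s*m)^(s*m) ≤ (s*m+1)^s * (Amul s m * m^(s*m)) := by
  induction s with
  | zero => simp [Amul]
  | succ n ih =>
    have key := choose_max ((n+1)*m) m (by nlinarith)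
    have e : (n+1)*m - m = n*m := by ring_nf; omega
    rw [e] at key
    calc ((n+1)*m)^((n+1)*m)
        ≤ ((n+1)*m+1) * (((n+1)*m).choose m * m^m * (n*m)^(n*m)) := key
      _ ≤ ((n+1)*m+1) * (((n+1)*m).choose m * m^m * ((n*m+1)^n * (Amul n m * m^(n*m)))) := by
          apply Nat.mul_le_mul_left
          apply Nat.mul_le_mul_left
          exact ih
      _ ≤ ((n+1)*m+1) * (((n+1)*m).choose m * m^m * (((n+1)*m+1)^n * (Amul n m * m^(n*m)))) := by
          apply Nat.mul_le_mul_left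
          apply Nat.mul_le_mul_left
          apply Nat.mul_le_mul_right
          exact Nat.pow_le_pow_left (by nlinarith) n
      _ = ((n+1)*m+1)^(n+1) * (Amul (n+1) m * m^((n+1)*m)) := by
          unfold Amul
          rw [Finset.prod_range_succ]
          rw [show (n+1)*m = n*m + m by ring, pow_add, pow_succ]
          ring

lemma two_pow_le (s : ℕ) (hs : 1 ≤ s) : 2 * s^s ≤ (s+1)^s := by
  have key : ∀ n a : ℕ, 1 ≤ n → a^n + n * a^(n-1) ≤ (a+1)^n := by
    intro n
    induction n with
    | zero => omega
    | succ k ih =>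
      intro a _
      rcases Nat.eq_zero_or_pos k with hk | hk
      · subst hk; simp
      · have h1 := ih a hk
        calc a^(k+1) + (k+1) * a^(k+1-1)
            = a * a^k + k * a^k + a^k := by
              rw [Nat.add_sub_cancel, pow_succ]; ring
          _ ≤ a * a^k + (a * (k * a^(k-1)) + (k * a^(k-1) + a^k)) := by
              have : k * a^k ≤ a * (k * a^(k-1)) := by
                rcases Nat.eq_zero_or_pos a with ha | ha
                · subst ha; rcases k with _|k' <;> simp
                · apply le_of_eq
                  rw [← mul_assoc, mul_comm a k, mul_assoc]
                  congr 1
                  rw [← pow_succ']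
                  congr 1; omega
              omega
          _ = (a + 1) * (a^k + k * a^(k-1)) := by ring
          _ ≤ (a + 1) * (a+1)^k := Nat.mul_le_mul_left _ h1
          _ = (a+1)^(k+1) := by rw [pow_succ]; ring
  have := key s s hs
  have e : s * s^(s-1) = s^s := by
    rw [← pow_succ']
    congr 1; omega
  omega

lemma pow_lower (s : ℕ) (hs : 5 ≤ s) : 4 * Nat.factorial (s+1) ≤ s^s := by
  induction s with
  | zero => omega
  | succ n ih =>
    rcases Nat.lt_or_ge n 5 with h | h
    · have h4 : n = 4 := by omega
      subst h4; decide
    · have h1 := ih h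
      calc 4 * Nat.factorial (n+2)
          = (n+2) * (4 * Nat.factorial (n+1)) := by rw [Nat.factorial_succ]; ring
        _ ≤ (n+2) * n^n := Nat.mul_le_mul_left _ h1
        _ ≤ (2*(n+1)) * n^n := Nat.mul_le_mul_right _ (by omega)
        _ = (n+1) * (2 * n^n) := by ring
        _ ≤ (n+1) * (n+1)^n := Nat.mul_le_mul_left _ (two_pow_le n (by omega))
        _ = (n+1)^(n+1) := by rw [pow_succ]; ring

lemma event (s : ℕ) (hs : 1 ≤ s) : ∀ᶠ m : ℕ in atTop, 4 * (s*m+1)^s < 2^m := by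
  have h0 := tendsto_pow_const_div_const_pow_of_one_lt s (show (1:ℝ) < 2 by norm_num)
  have hε : (0:ℝ) < 1/(4*(2*(s:ℝ))^s) := by positivity
  filter_upwards [h0.eventually_lt_const hε, eventually_ge_atTop 1] with m hm hm1
  have h2 : (0:ℝ) < 2^m := by positivity
  rw [div_lt_iff₀ h2, one_div, inv_mul_eq_div, lt_div_iff₀ (by positivity)] at hm
  have key : (4:ℝ) * ((s:ℝ)*m+1)^s < 2^m := by
    calc (4:ℝ) * ((s:ℝ)*m+1)^s ≤ 4 * (2*(s:ℝ)*m)^s := by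
          gcongr
          · have hs1 : (1:ℝ) ≤ (s:ℝ) := by exact_mod_cast hs
            have hm1' : (1:ℝ) ≤ (m:ℝ) := by exact_mod_cast hm1
            nlinarith
      _ = (m:ℝ)^s * (4 * (2*(s:ℝ))^s) := by rw [mul_pow (2*(s:ℝ)) (m:ℝ)]; ring
      _ < 2^m := hm
  have : ((4 * (s*m+1)^s : ℕ) : ℝ) < ((2^m : ℕ) : ℝ) := by push_cast; convert key using 3
  exact_mod_cast this

lemma main_ineq (s : ℕ) (hs : 5 ≤ s) (m : ℕ) (hm1 : 1 ≤ m)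
    (hev : 4 * (s*m+1)^s < 2^m) : (2:ℝ) ^ m < N s m / (P s m : ℝ) := by
  set B := Nat.factorial (s+1) with hB
  -- Step 1 (ℕ): 2^(m+1) * P s m < Amul s m
  have hBpos : 0 < B := Nat.factorial_pos _
  have htel : s^(s*m) ≤ (s*m+1)^s * Amul s m := by
    have h := telescoped s m
    rw [mul_pow] at h
    have h' : s^(s*m) * m^(s*m) ≤ ((s*m+1)^s * Amul s m) * m^(s*m) := by
      calc s^(s*m) * m^(s*m) ≤ (s*m+1)^s * (Amul s m * m^(s*m)) := h
        _ = ((s*m+1)^s * Amul s m) * m^(s*m) := by ring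
    exact Nat.le_of_mul_le_mul_right h' (Nat.pow_pos hm1)
  have hnat : 2^(m+1) * P s m < Amul s m := by
    have hP : P s m ≤ 2 * B^m := by
      have h := P_le s m
      rw [← hB] at h
      have hB1 : 1 ≤ B^m := Nat.one_le_pow _ _ hBpos
      omega
    have step1 : 2^(m+1) * P s m ≤ 2^(m+2) * B^m := by
      calc 2^(m+1) * P s m ≤ 2^(m+1) * (2 * B^m) := Nat.mul_le_mul_left _ hP
        _ = 2^(m+2) * B^m := by rw [pow_succ]; ring
    have step2 : 2^(m+2) * B^m * (s*m+1)^s < Amul s m * (s*m+1)^s := by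
      calc 2^(m+2) * B^m * (s*m+1)^s
          = (4 * (s*m+1)^s) * (2^m * B^m) := by rw [show m+2 = m+1+1 from rfl, pow_succ, pow_succ]; ring
        _ < 2^m * (2^m * B^m) := by
            have hXpos : 0 < 2^m * B^m :=
              Nat.mul_pos (Nat.pow_pos (by omega)) (Nat.pow_pos hBpos)
            exact mul_lt_mul_of_pos_right hev hXpos
        _ = (4 * B)^m := by rw [mul_pow, show (4:ℕ) = 2*2 from rfl, mul_pow]; ring
        _ ≤ (s^s)^m := Nat.pow_le_pow_left (pow_lower s hs) m
        _ = s^(s*m) := by rw [← pow_mul]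
        _ ≤ (s*m+1)^s * Amul s m := htel
        _ = Amul s m * (s*m+1)^s := Nat.mul_comm _ _
    have := Nat.lt_of_mul_lt_mul_right step2
    omega
  -- Step 2 (ℝ)
  have hmfac : (0:ℝ) < (Nat.factorial m : ℝ) := by exact_mod_cast Nat.factorial_pos m
  have hNeq : N s m = (Amul s m : ℝ) / 2 := by
    unfold N
    rw [factorial_eq s m]
    push_cast
    field_simp
  have hPpos : (0:ℝ) < (P s m : ℝ) := by exact_mod_cast P_pos s m
  rw [hNeq, div_div]
  rw [lt_div_iff₀ (by positivity)]
  have : ((2^(m+1) * P s m : ℕ) : ℝ) < ((Amul s m : ℕ) : ℝ) := by exact_mod_cast hnat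
  push_cast at this
  calc (2:ℝ)^m * (2 * (P s m : ℝ)) = 2^(m+1) * (P s m : ℝ) := by rw [pow_succ]; ring
    _ < (Amul s m : ℝ) := this

/-- For all sufficiently large `s`, there is a constant `H > 1` such that
`N(s,m)/P(s,m) > H^m` for all sufficiently large `m`; in particular
`N(s,m)/P(s,m) → ∞` as `m → ∞`. -/
theorem ratio_tendsto_atTop :
    ∃ s₀ : ℕ, 2 ≤ s₀ ∧ ∀ s : ℕ, s₀ ≤ s →
      (∃ H : ℝ, 1 < H ∧ ∃ m₀ : ℕ, 1 ≤ m₀ ∧ ∀ m : ℕ, m₀ ≤ m →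
        H ^ m < N s m / (P s m : ℝ)) ∧
      Tendsto (fun m : ℕ => N s m / (P s m : ℝ)) atTop atTop := by
  refine ⟨5, by norm_num, fun s hs => ?_⟩
  obtain ⟨m₁, hm₁⟩ := (event s (by omega)).exists_forall_of_atTop
  have hmain : ∀ m : ℕ, max m₁ 1 ≤ m → (2:ℝ) ^ m < N s m / (P s m : ℝ) := by
    intro m hm
    exact main_ineq s hs m (le_trans (le_max_right _ _) hm)
      (hm₁ m (le_trans (le_max_left _ _) hm))
  constructor
  · exact ⟨2, by norm_num, max m₁ 1, le_max_right _ _, hmain⟩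
  · refine tendsto_atTop_mono' atTop ?_ (tendsto_pow_atTop_atTop_of_one_lt (show (1:ℝ) < 2 by norm_num))
    filter_upwards [eventually_ge_atTop (max m₁ 1)] with m hm
    exact le_of_lt (hmain m hm)
end
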